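/- arXiv:2310.02015 — 6 statements merged into one kernel-verified Lean document; each statement's English description precedes it below -/
import Mathlib

section
/- Let 0 < μ < L and let f: R^d → R be L-smooth and μ-strongly convex. Then for all x, y ∈ R^d the interpolation inequality holds: f(x) ≥ f(y) + ⟨∇f(y), x - y⟩ + (1/(2L))‖∇f(x) - ∇f(y)‖² + (μ/(2(1 - μ/L)))‖x - (1/L)∇f(x) - y + (1/L)∇f(y)‖². -/
open RealInnerProductSpace

/-- Interpolation inequality for `L`-smooth `μ`-strongly-convex
functions (`0 < μ < L`): for all `x, y`,
`f x ≥ f y + ⟪∇f y, x - y⟫ + (1/(2L))‖∇f x - ∇f y‖² + (μ/(2(1-μ/L)))‖x - ∇f x/L - y + ∇f y/L‖²`. -/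
theorem smooth_strongly_convex_interpolation
    {d : ℕ} (μ L : ℝ) (hμ : 0 < μ) (hμL : μ < L)
    (f : EuclideanSpace ℝ (Fin d) → ℝ) (hf : ContDiff ℝ 1 f)
    (hsmooth : ∀ x y : EuclideanSpace ℝ (Fin d),
      f x ≤ f y + ⟪gradient f y, x - y⟫ + L / 2 * ‖x - y‖ ^ 2)
    (hstrong : ∀ x y : EuclideanSpace ℝ (Fin d),
      f x ≥ f y + ⟪gradient f y, x - y⟫ + μ / 2 * ‖x - y‖ ^ 2)
    (x y : EuclideanSpace ℝ (Fin d)) :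
    f x ≥ f y + ⟪gradient f y, x - y⟫
      + 1 / (2 * L) * ‖gradient f x - gradient f y‖ ^ 2
      + μ / (2 * (1 - μ / L)) *
          ‖x - (1 / L) • gradient f x - y + (1 / L) • gradient f y‖ ^ 2 := by
  have hL : (0:ℝ) < L := hμ.trans hμL
  have hLμ : (0:ℝ) < L - μ := by linarith
  set u := gradient f x with hu
  set v := gradient f y with hv
  set G : EuclideanSpace ℝ (Fin d) := u - v with hG
  set D : EuclideanSpace ℝ (Fin d) := x - y with hD
  set c : ℝ := (L - μ)⁻¹ with hc
  set w : EuclideanSpace ℝ (Fin d) := G - μ • D with hw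
  set z : EuclideanSpace ℝ (Fin d) := x - c • w with hzdef
  have h1 := hstrong z y
  have h2 := hsmooth z x
  rw [← hv] at h1
  rw [← hu] at h2
  have hzy : z - y = D - c • w := by rw [hzdef, hD]; abel
  have hzx : z - x = -(c • w) := by rw [hzdef]; abel
  set A : ℝ := ‖G‖ ^ 2 with hA
  set B : ℝ := ⟪G, D⟫ with hB
  set C : ℝ := ‖D‖ ^ 2 with hC
  -- scalar values of auxiliary inner products and norms
  have hww : ‖w‖ ^ 2 = A - 2 * μ * B + μ ^ 2 * C := by
    rw [hw, norm_sub_sq_real, real_inner_smul_right, norm_smul, hA, hB, hC]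
    rw [Real.norm_eq_abs, abs_of_pos hμ]
    ring
  have hDw : ⟪D, w⟫ = B - μ * C := by
    rw [hw, inner_sub_right, real_inner_smul_right, real_inner_comm G D,
      real_inner_self_eq_norm_sq, hB, hC]
  have huvw : ⟪u, w⟫ = ⟪v, w⟫ + (A - 2 * μ * B + μ ^ 2 * C) + μ * (B - μ * C) := by
    have : ⟪u, w⟫ - ⟪v, w⟫ = ⟪G, w⟫ := by rw [hG, inner_sub_left]
    have hGw : ⟪G, w⟫ = ‖w‖ ^ 2 + μ * ⟪D, w⟫ := by
      have : G = w + μ • D := by rw [hw]; abel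
      rw [this, inner_add_left, real_inner_self_eq_norm_sq, real_inner_smul_left]
    rw [hww, hDw] at hGw
    linarith [this, hGw]
  -- rewrite h1
  rw [hzy] at h1
  have e1 : ⟪v, D - c • w⟫ = ⟪v, D⟫ - c * ⟪v, w⟫ := by
    rw [inner_sub_right, real_inner_smul_right]
  have e2 : ‖D - c • w‖ ^ 2 = C - 2 * c * (B - μ * C) + c ^ 2 * (A - 2 * μ * B + μ ^ 2 * C) := by
    rw [norm_sub_sq_real, real_inner_smul_right, hDw, norm_smul, mul_pow, hww, hC,
      Real.norm_eq_abs, sq_abs]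
    ring
  rw [e1, e2] at h1
  -- rewrite h2
  rw [hzx] at h2
  have e3 : ⟪u, -(c • w)⟫ = -(c * ⟪u, w⟫) := by
    rw [inner_neg_right, real_inner_smul_right]
  have e4 : ‖-(c • w)‖ ^ 2 = c ^ 2 * (A - 2 * μ * B + μ ^ 2 * C) := by
    rw [norm_neg, norm_smul, mul_pow, hww, Real.norm_eq_abs, sq_abs]
  rw [e3, e4] at h2
  -- rewrite the goal
  have e5 : x - (1 / L) • u - y + (1 / L) • v = D - (1 / L) • G := by
    rw [hD, hG, smul_sub]; abel
  rw [e5]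
  have e6 : ‖D - (1 / L) • G‖ ^ 2 = C - 2 * (1 / L) * B + (1 / L) ^ 2 * A := by
    rw [norm_sub_sq_real, real_inner_smul_right, real_inner_comm G D, norm_smul, mul_pow, hA,
      hB, hC, Real.norm_eq_abs, sq_abs]
    ring
  rw [e6]
  -- now everything is scalar; conclude
  have key : 1 / (2 * L) * A + μ / (2 * (1 - μ / L)) * (C - 2 * (1 / L) * B + (1 / L) ^ 2 * A)
      = - c * ⟪v, w⟫ + μ / 2 * (C - 2 * c * (B - μ * C) + c ^ 2 * (A - 2 * μ * B + μ ^ 2 * C))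
        + c * ⟪u, w⟫ - L / 2 * (c ^ 2 * (A - 2 * μ * B + μ ^ 2 * C)) := by
    rw [huvw, hc]
    have h1ml : 1 - μ / L = (L - μ) / L := by field_simp
    rw [h1ml]
    field_simp
    ring
  linarith [h1, h2, key]
end

section
/- Let 0 < μ < L and let f: R^d → R be L-smooth and μ-strongly convex, with unique minimizer x_* and minimum value f_* = f(x_*). If x_0, x_1 ∈ R^d satisfy the two orthogonality conditions ⟨∇f(x_1), ∇f(x_0)⟩ = 0 and ⟨∇f(x_1), x_1 - x_0⟩ = 0, then f(x_1) - f_* ≤ ((L-μ)/(L+μ))² (f(x_0) - f_*). -/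
open RealInnerProductSpace

lemma expand2 {E : Type*} [NormedAddCommGroup E] [InnerProductSpace ℝ E] (a b : ℝ) (p q : E) :
    ‖a • p + b • q‖ ^ 2
      = a ^ 2 * ⟪p, p⟫ + b ^ 2 * ⟪q, q⟫ + 2 * (a * b) * ⟪p, q⟫ := by
  rw [← real_inner_self_eq_norm_sq]
  simp only [inner_add_left, inner_add_right, real_inner_smul_left, real_inner_smul_right]
  linear_combination (-(a * b)) * real_inner_comm q p

lemma expand3 {E : Type*} [NormedAddCommGroup E] [InnerProductSpace ℝ E] (a b c : ℝ) (p q r : E) :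
    ‖a • p + b • q + c • r‖ ^ 2
      = a ^ 2 * ⟪p, p⟫ + b ^ 2 * ⟪q, q⟫ + c ^ 2 * ⟪r, r⟫
        + 2 * (a * b) * ⟪p, q⟫ + 2 * (a * c) * ⟪p, r⟫ + 2 * (b * c) * ⟪q, r⟫ := by
  rw [← real_inner_self_eq_norm_sq]
  simp only [inner_add_left, inner_add_right, real_inner_smul_left, real_inner_smul_right]
  linear_combination (-(a * b)) * real_inner_comm q p + (-(a * c)) * real_inner_comm r p
    + (-(b * c)) * real_inner_comm r q

lemma expand4 {E : Type*} [NormedAddCommGroup E] [InnerProductSpace ℝ E] (a b c e : ℝ)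
    (p q r s : E) :
    ‖a • p + b • q + c • r + e • s‖ ^ 2
      = a ^ 2 * ⟪p, p⟫ + b ^ 2 * ⟪q, q⟫ + c ^ 2 * ⟪r, r⟫ + e ^ 2 * ⟪s, s⟫
        + 2 * (a * b) * ⟪p, q⟫ + 2 * (a * c) * ⟪p, r⟫ + 2 * (a * e) * ⟪p, s⟫
        + 2 * (b * c) * ⟪q, r⟫ + 2 * (b * e) * ⟪q, s⟫ + 2 * (c * e) * ⟪r, s⟫ := by
  rw [← real_inner_self_eq_norm_sq]
  simp only [inner_add_left, inner_add_right, real_inner_smul_left, real_inner_smul_right]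
  linear_combination (-(a * b)) * real_inner_comm q p + (-(a * c)) * real_inner_comm r p
    + (-(a * e)) * real_inner_comm s p + (-(b * c)) * real_inner_comm r q
    + (-(b * e)) * real_inner_comm s q + (-(c * e)) * real_inner_comm s r

set_option maxHeartbeats 2000000 in
/-- For an `L`-smooth `μ`-strongly-convex `f` (`0 < μ < L`) with unique
minimizer `x_*` and minimum value `f_* = f(x_*)`, if `x_0, x_1` satisfy the two exact
line-search orthogonality conditions `⟪∇f(x₁), ∇f(x₀)⟫ = 0` and `⟪∇f(x₁), x₁ - x₀⟫ = 0`,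
then `f(x₁) - f_* ≤ ((L-μ)/(L+μ))² (f(x₀) - f_*)`. -/
theorem line_search_orthogonality_rate
    {d : ℕ} (μ L : ℝ) (hμ : 0 < μ) (hμL : μ < L)
    (f : EuclideanSpace ℝ (Fin d) → ℝ) (hf : ContDiff ℝ 1 f)
    (hsmooth : ∀ x y : EuclideanSpace ℝ (Fin d),
      f x ≤ f y + ⟪gradient f y, x - y⟫ + L / 2 * ‖x - y‖ ^ 2)
    (hstrong : ∀ x y : EuclideanSpace ℝ (Fin d),
      f x ≥ f y + ⟪gradient f y, x - y⟫ + μ / 2 * ‖x - y‖ ^ 2)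
    (xstar : EuclideanSpace ℝ (Fin d)) (hmin : ∀ y, f xstar ≤ f y)
    (huniq : ∀ y, (∀ z, f y ≤ f z) → y = xstar)
    (fstar : ℝ) (hfstar : fstar = f xstar)
    (x0 x1 : EuclideanSpace ℝ (Fin d))
    (horth1 : ⟪gradient f x1, gradient f x0⟫ = 0)
    (horth2 : ⟪gradient f x1, x1 - x0⟫ = 0) :
    f x1 - fstar ≤ ((L - μ) / (L + μ)) ^ 2 * (f x0 - fstar) := by
  have hL : (0:ℝ) < L := hμ.trans hμL
  have hba : (0:ℝ) < L - μ := sub_pos.mpr hμL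
  have hb : (0:ℝ) < L + μ := by linarith
  have hbne : L - μ ≠ 0 := ne_of_gt hba
  have hLne : L ≠ 0 := ne_of_gt hL
  -- Step 1: gradient vanishes at the minimizer
  have hgs : gradient f xstar = 0 := by
    set g := gradient f xstar with hgdef
    have h2 := hsmooth (xstar - (1 / L) • g) xstar
    have e0 : xstar - (1 / L) • g - xstar = -((1 / L) • g) := sub_sub_cancel_left _ _
    rw [e0, inner_neg_right, real_inner_smul_right, real_inner_self_eq_norm_sq,
      norm_neg, norm_smul, Real.norm_eq_abs, mul_pow, sq_abs] at h2
    have hm := hmin (xstar - (1 / L) • g)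
    have hq : (1 / L) * ‖g‖ ^ 2 - L / 2 * ((1 / L) ^ 2 * ‖g‖ ^ 2)
        = 1 / (2 * L) * ‖g‖ ^ 2 := by
      field_simp
      ring
    have key : 1 / (2 * L) * ‖g‖ ^ 2 ≤ 0 := by linarith [h2, hm, hq]
    have hpos : (0:ℝ) < 1 / (2 * L) := by positivity
    have hng : ‖g‖ ^ 2 ≤ 0 := by nlinarith [key, hpos]
    have : ‖g‖ = 0 := by nlinarith [norm_nonneg g, hng]
    exact norm_eq_zero.mp this
  -- Step 2: denominator-free interpolation inequality
  have interp : ∀ x y : EuclideanSpace ℝ (Fin d),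
      ‖gradient f x - gradient f y - μ • (x - y)‖ ^ 2
        ≤ (L - μ) * (2 * (f x - f y - ⟪gradient f y, x - y⟫) - μ * ‖x - y‖ ^ 2) := by
    intro x y
    set gx := gradient f x with hgx
    set gy := gradient f y with hgy
    set w := gx - gy - μ • (x - y) with hw
    set z := x - (1 / (L - μ)) • w with hz
    have h1 := hstrong z y
    have h2 := hsmooth z x
    have ex : z - x = -((1 / (L - μ)) • w) := sub_sub_cancel_left _ _
    have ey : z - y = (x - y) - (1 / (L - μ)) • w := sub_right_comm _ _ _
    rw [ex, inner_neg_right, real_inner_smul_right, norm_neg, norm_smul,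
      Real.norm_eq_abs, mul_pow, sq_abs] at h2
    rw [ey, inner_sub_right, real_inner_smul_right, norm_sub_sq_real,
      real_inner_smul_right, norm_smul, Real.norm_eq_abs, mul_pow, sq_abs] at h1
    have ez5 : ⟪gx, w⟫ - ⟪gy, w⟫ - μ * ⟪x - y, w⟫ = ‖w‖ ^ 2 := by
      have e : ⟪w, w⟫ = ⟪gx, w⟫ - ⟪gy, w⟫ - μ * ⟪x - y, w⟫ := by
        conv_lhs => rw [hw]
        simp only [inner_sub_left, real_inner_smul_left]
        rw [← hw]
      rw [← e, real_inner_self_eq_norm_sq]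
    have H : 0 ≤ f x - f y - ⟪gy, x - y⟫ - μ / 2 * ‖x - y‖ ^ 2
        - (1 / (L - μ)) * (⟪gx, w⟫ - ⟪gy, w⟫ - μ * ⟪x - y, w⟫)
        + (L - μ) / 2 * ((1 / (L - μ)) ^ 2 * ‖w‖ ^ 2) := by linarith [h1, h2]
    rw [ez5] at H
    have hfe : (1 / (L - μ)) * ‖w‖ ^ 2 - (L - μ) / 2 * ((1 / (L - μ)) ^ 2 * ‖w‖ ^ 2)
        = 1 / (2 * (L - μ)) * ‖w‖ ^ 2 := by
      field_simp
      ring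
    have H2 : 1 / (2 * (L - μ)) * ‖w‖ ^ 2
        ≤ f x - f y - ⟪gy, x - y⟫ - μ / 2 * ‖x - y‖ ^ 2 := by linarith [H, hfe]
    have hmul := mul_le_mul_of_nonneg_left H2 (show (0:ℝ) ≤ 2 * (L - μ) by linarith)
    have hcol : 2 * (L - μ) * (1 / (2 * (L - μ)) * ‖w‖ ^ 2) = ‖w‖ ^ 2 := by
      field_simp
    linarith [hmul, hcol]
  -- Step 3: instantiate and expand into inner-product atoms
  set g0 := gradient f x0 with hg0
  set g1 := gradient f x1 with hg1
  have I1 := interp xstar x0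
  have I2 := interp xstar x1
  have I3 := interp x0 x1
  rw [hgs] at I1 I2
  -- expansions for I1
  have hv1 : (0:EuclideanSpace ℝ (Fin d)) - g0 - μ • (xstar - x0)
      = (-1 : ℝ) • g0 + μ • (x0 - xstar) := by module
  have en1 : ‖(0:EuclideanSpace ℝ (Fin d)) - g0 - μ • (xstar - x0)‖ ^ 2
      = ⟪g0, g0⟫ - 2 * μ * ⟪g0, x0 - xstar⟫ + μ ^ 2 * ⟪x0 - xstar, x0 - xstar⟫ := by
    rw [hv1, expand2]
    ring
  have ei1 : ⟪g0, xstar - x0⟫ = -⟪g0, x0 - xstar⟫ := by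
    rw [← neg_sub x0 xstar, inner_neg_right]
  have em1 : ‖xstar - x0‖ ^ 2 = ⟪x0 - xstar, x0 - xstar⟫ := by
    rw [norm_sub_rev]
    exact (real_inner_self_eq_norm_sq _).symm
  rw [en1, ei1, em1] at I1
  -- expansions for I2
  have hv2 : (0:EuclideanSpace ℝ (Fin d)) - g1 - μ • (xstar - x1)
      = (-1 : ℝ) • g1 + μ • (x1 - xstar) := by module
  have en2 : ‖(0:EuclideanSpace ℝ (Fin d)) - g1 - μ • (xstar - x1)‖ ^ 2
      = ⟪g1, g1⟫ - 2 * μ * ⟪g1, x1 - xstar⟫ + μ ^ 2 * ⟪x1 - xstar, x1 - xstar⟫ := by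
    rw [hv2, expand2]
    ring
  have ei2 : ⟪g1, xstar - x1⟫ = -⟪g1, x1 - xstar⟫ := by
    rw [← neg_sub x1 xstar, inner_neg_right]
  have em2 : ‖xstar - x1‖ ^ 2 = ⟪x1 - xstar, x1 - xstar⟫ := by
    rw [norm_sub_rev]
    exact (real_inner_self_eq_norm_sq _).symm
  rw [en2, ei2, em2] at I2
  -- expansions for I3
  have hv3 : g0 - g1 - μ • (x0 - x1)
      = (1 : ℝ) • g0 + (-1 : ℝ) • g1 + (-μ) • (x0 - xstar) + μ • (x1 - xstar) := by module
  have en3 : ‖g0 - g1 - μ • (x0 - x1)‖ ^ 2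
      = ⟪g0, g0⟫ + ⟪g1, g1⟫ + μ ^ 2 * ⟪x0 - xstar, x0 - xstar⟫
        + μ ^ 2 * ⟪x1 - xstar, x1 - xstar⟫ - 2 * ⟪g0, g1⟫
        - 2 * μ * ⟪g0, x0 - xstar⟫ + 2 * μ * ⟪g0, x1 - xstar⟫
        + 2 * μ * ⟪g1, x0 - xstar⟫ - 2 * μ * ⟪g1, x1 - xstar⟫
        - 2 * μ ^ 2 * ⟪x0 - xstar, x1 - xstar⟫ := by
    rw [hv3, expand4]
    ring
  have hv3' : x0 - x1 = (x0 - xstar) - (x1 - xstar) := by abel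
  have ei3 : ⟪g1, x0 - x1⟫ = ⟪g1, x0 - xstar⟫ - ⟪g1, x1 - xstar⟫ := by
    rw [hv3', inner_sub_right]
  have em3 : ‖x0 - x1‖ ^ 2
      = ⟪x0 - xstar, x0 - xstar⟫ - 2 * ⟪x0 - xstar, x1 - xstar⟫
        + ⟪x1 - xstar, x1 - xstar⟫ := by
    rw [show x0 - x1 = (1 : ℝ) • (x0 - xstar) + (-1 : ℝ) • (x1 - xstar) by module, expand2]
    ring
  rw [en3, ei3, em3] at I3
  -- orthogonality in atom form
  have ho1 : ⟪g0, g1⟫ = 0 := by rw [real_inner_comm]; exact horth1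
  have ho2 : ⟪g1, x1 - xstar⟫ - ⟪g1, x0 - xstar⟫ = 0 := by
    rw [← inner_sub_right, show (x1 - xstar) - (x0 - xstar) = x1 - x0 by abel]
    exact horth2
  have hC1 : 4 * (L - μ) * (L + μ) * ⟪g0, g1⟫ = 0 := by rw [ho1]; ring
  have hC2 : 2 * (L - μ) * (L + μ) ^ 2 * (⟪g1, x1 - xstar⟫ - ⟪g1, x0 - xstar⟫) = 0 := by
    rw [ho2]; ring
  -- the two nonnegative squares from the SOS certificate
  have W1n : (0:ℝ)
      ≤ (L - μ) ^ 2 * ⟪g0, g0⟫ + (L + μ) ^ 2 * ⟪g1, g1⟫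
        + (-(μ * (L - μ))) ^ 2 * ⟪x0 - xstar, x0 - xstar⟫
        + (-(μ * (L + μ))) ^ 2 * ⟪x1 - xstar, x1 - xstar⟫
        + 2 * ((L - μ) * (L + μ)) * ⟪g0, g1⟫
        + 2 * ((L - μ) * (-(μ * (L - μ)))) * ⟪g0, x0 - xstar⟫
        + 2 * ((L - μ) * (-(μ * (L + μ)))) * ⟪g0, x1 - xstar⟫
        + 2 * ((L + μ) * (-(μ * (L - μ)))) * ⟪g1, x0 - xstar⟫
        + 2 * ((L + μ) * (-(μ * (L + μ)))) * ⟪g1, x1 - xstar⟫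
        + 2 * ((-(μ * (L - μ))) * (-(μ * (L + μ)))) * ⟪x0 - xstar, x1 - xstar⟫ := by
    rw [← expand4 (L - μ) (L + μ) (-(μ * (L - μ))) (-(μ * (L + μ))) g0 g1
      (x0 - xstar) (x1 - xstar)]
    positivity
  have W2n : (0:ℝ)
      ≤ (2:ℝ) ^ 2 * ⟪g0, g0⟫ + (-(L + μ)) ^ 2 * ⟪x0 - xstar, x0 - xstar⟫
        + (L + μ) ^ 2 * ⟪x1 - xstar, x1 - xstar⟫
        + 2 * ((2:ℝ) * (-(L + μ))) * ⟪g0, x0 - xstar⟫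
        + 2 * ((2:ℝ) * (L + μ)) * ⟪g0, x1 - xstar⟫
        + 2 * ((-(L + μ)) * (L + μ)) * ⟪x0 - xstar, x1 - xstar⟫ := by
    rw [← expand3 (2:ℝ) (-(L + μ)) (L + μ) g0 (x0 - xstar) (x1 - xstar)]
    positivity
  -- Step 4: combine with the certificate multipliers
  have P1 := mul_nonneg (show (0:ℝ) ≤ 2 * μ * (L - μ) by positivity) (sub_nonneg.mpr I1)
  have P2 := mul_nonneg (show (0:ℝ) ≤ 2 * μ * (L + μ) by positivity) (sub_nonneg.mpr I2)
  have P3 := mul_nonneg (show (0:ℝ) ≤ (L + μ) * (L - μ) by positivity) (sub_nonneg.mpr I3)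
  have PW2 := mul_nonneg (show (0:ℝ) ≤ μ * (L - μ) by positivity) W2n
  have master : 0 ≤ 2 * (L - μ) ^ 3 * (f x0 - f xstar)
      - 2 * (L - μ) * (L + μ) ^ 2 * (f x1 - f xstar) := by
    linarith [P1, P2, P3, W1n, PW2, hC1, hC2]
  have step2 : (L + μ) ^ 2 * (f x1 - f xstar) ≤ (L - μ) ^ 2 * (f x0 - f xstar) := by
    by_contra hcon
    push_neg at hcon
    have hprod := mul_pos hba (sub_pos.mpr hcon)
    nlinarith [master, hprod]
  subst hfstar
  rw [div_pow, div_mul_eq_mul_div, le_div_iff₀ (by positivity : (0:ℝ) < (L + μ) ^ 2)]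
  nlinarith [step2]
end

section
/- Let 0 < μ < L and let f: R^d → R be L-smooth and μ-strongly convex, with unique minimizer x_* and minimum value f_* = f(x_*). Let x_0 ∈ R^d and let x_1 be a minimizer of f over the line {x_0 + α ∇f(x_0) : α ∈ R} (gradient descent with exact line-search). Then f(x_1) - f_* ≤ ((L-μ)/(L+μ))² (f(x_0) - f_*). -/
open RealInnerProductSpace

section helpers
variable {E : Type*} [NormedAddCommGroup E] [InnerProductSpace ℝ E]

lemma comb_sq (a b c : E) (x y z : ℝ) :
    ‖x•a + y•b + z•c‖^2 = x^2*‖a‖^2 + y^2*‖b‖^2 + z^2*‖c‖^2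
      + 2*(x*y)*⟪a,b⟫ + 2*(x*z)*⟪a,c⟫ + 2*(y*z)*⟪b,c⟫ := by
  rw [← real_inner_self_eq_norm_sq, ← real_inner_self_eq_norm_sq,
    ← real_inner_self_eq_norm_sq, ← real_inner_self_eq_norm_sq]
  simp only [inner_add_left, inner_add_right, real_inner_smul_left, real_inner_smul_right]
  rw [real_inner_comm b a, real_inner_comm c a, real_inner_comm c b]
  ring

lemma inner_comb (g a b c : E) (x y z : ℝ) :
    ⟪g, x•a + y•b + z•c⟫ = x*⟪g,a⟫ + y*⟪g,b⟫ + z*⟪g,c⟫ := by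
  simp only [inner_add_right, real_inner_smul_right]

lemma inner_comb_b (a b c : E) (x y z : ℝ) :
    ⟪b, x•a + y•b + z•c⟫ = x*⟪a,b⟫ + y*‖b‖^2 + z*⟪b,c⟫ := by
  simp only [inner_add_right, real_inner_smul_right]
  rw [real_inner_comm b a, real_inner_self_eq_norm_sq]

lemma inner_comb_c (a b c : E) (x y z : ℝ) :
    ⟪c, x•a + y•b + z•c⟫ = x*⟪a,c⟫ + y*⟪b,c⟫ + z*‖c‖^2 := by
  simp only [inner_add_right, real_inner_smul_right]
  rw [real_inner_comm c a, real_inner_comm c b, real_inner_self_eq_norm_sq]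

end helpers

set_option maxHeartbeats 1000000 in
/-- Gradient descent with exact line-search on an `L`-smooth
`μ`-strongly-convex function (`0 < μ < L`) with unique minimizer `x_*` and minimum value
`f_* = f(x_*)`: if `x₁` minimizes `f` over the line `{x₀ + α ∇f(x₀) : α ∈ ℝ}`, then
`f(x₁) - f_* ≤ ((L-μ)/(L+μ))² (f(x₀) - f_*)`. -/
theorem gradient_descent_exact_line_search_rate
    {d : ℕ} (μ L : ℝ) (hμ : 0 < μ) (hμL : μ < L)
    (f : EuclideanSpace ℝ (Fin d) → ℝ) (hf : ContDiff ℝ 1 f)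
    (hsmooth : ∀ x y : EuclideanSpace ℝ (Fin d),
      f x ≤ f y + ⟪gradient f y, x - y⟫ + L / 2 * ‖x - y‖ ^ 2)
    (hstrong : ∀ x y : EuclideanSpace ℝ (Fin d),
      f x ≥ f y + ⟪gradient f y, x - y⟫ + μ / 2 * ‖x - y‖ ^ 2)
    (xstar : EuclideanSpace ℝ (Fin d)) (hmin : ∀ y, f xstar ≤ f y)
    (huniq : ∀ y, (∀ z, f y ≤ f z) → y = xstar)
    (fstar : ℝ) (hfstar : fstar = f xstar)
    (x0 x1 : EuclideanSpace ℝ (Fin d))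
    (hx1mem : ∃ α : ℝ, x1 = x0 + α • gradient f x0)
    (hx1min : ∀ α : ℝ, f x1 ≤ f (x0 + α • gradient f x0)) :
    f x1 - fstar ≤ ((L - μ) / (L + μ)) ^ 2 * (f x0 - fstar) := by
  have hL0 : (0:ℝ) < L := hμ.trans hμL
  have hM : (0:ℝ) < L - μ := by linarith
  have hS : (0:ℝ) < L + μ := by linarith
  -- directional minimality kills the directional derivative
  have killer : ∀ v w : EuclideanSpace ℝ (Fin d),
      (∀ t : ℝ, f v ≤ f (v + t • w)) → ⟪gradient f v, w⟫ = 0 := by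
    intro v w hv
    set c := ⟪gradient f v, w⟫ with hcdef
    set K : ℝ := L*‖w‖^2 + 1 with hK
    have hKpos : (0:ℝ) < K := by positivity
    set t : ℝ := -c/K with ht
    have h2 := hsmooth (v + t • w) v
    have e : v + t • w - v = t • w := by abel
    rw [e, real_inner_smul_right] at h2
    have e3 : ‖t • w‖^2 = t^2*‖w‖^2 := by
      rw [norm_smul, mul_pow, Real.norm_eq_abs, sq_abs]
    rw [e3] at h2
    have h1 := hv t
    rw [← hcdef] at h2
    have hc0 : 0 ≤ t*c + L/2*(t^2*‖w‖^2) := by linarith [h2, h1]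
    have hc1 : 0 ≤ K^2 * (t*c + L/2*(t^2*‖w‖^2)) := by positivity
    have hc2 : K^2 * (t*c + L/2*(t^2*‖w‖^2)) = -(K*c^2) + L/2*(c^2*‖w‖^2) := by
      rw [ht]; field_simp
    rw [hc2, hK] at hc1
    have hsq : c^2 ≤ 0 := by nlinarith [sq_nonneg c, sq_nonneg ‖w‖, hL0]
    have : c^2 = 0 := le_antisymm hsq (sq_nonneg c)
    exact sq_eq_zero_iff.mp this
  -- gradient vanishes at the minimizer
  have hgs : gradient f xstar = 0 := by
    have h := killer xstar (gradient f xstar) (fun t => hmin _)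
    exact inner_self_eq_zero.mp h
  -- exact line search orthogonality
  obtain ⟨α, hα⟩ := hx1mem
  have horth : ⟪gradient f x1, gradient f x0⟫ = 0 := by
    refine killer x1 (gradient f x0) (fun t => ?_)
    have h := hx1min (α + t)
    have e : x0 + (α + t) • gradient f x0 = x1 + t • gradient f x0 := by
      rw [hα]; module
    rwa [e] at h
  -- interpolation inequality
  have key : ∀ x y : EuclideanSpace ℝ (Fin d),
      ‖gradient f y - gradient f x - μ•(y - x)‖^2
        ≤ 2*(L-μ)*(f y - f x - ⟪gradient f x, y - x⟫ - μ/2*‖y - x‖^2) := by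
    intro x y
    set gx := gradient f x with hgx
    set gy := gradient f y with hgy
    set cc : ℝ := (L-μ)⁻¹ with hcc
    set z := y + (cc*μ)•(y - x) + cc•gx + (-cc)•gy with hz
    have comb : f x + ⟪gx, z - x⟫ + μ/2*‖z - x‖^2
        ≤ f y + ⟪gy, z - y⟫ + L/2*‖z - y‖^2 :=
      le_trans (hstrong z x) (hsmooth z y)
    have comb2 : 0 ≤ 2*(L-μ)*((f y + ⟪gy, z - y⟫ + L/2*‖z - y‖^2)
        - (f x + ⟪gx, z - x⟫ + μ/2*‖z - x‖^2)) :=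
      mul_nonneg (by linarith) (by linarith)
    have e1 : z - x = (1+cc*μ)•(y-x) + cc•gx + (-cc)•gy := by rw [hz]; module
    have e2 : z - y = (cc*μ)•(y-x) + cc•gx + (-cc)•gy := by rw [hz]; module
    have e3 : gy - gx - μ•(y - x) = (-μ)•(y-x) + (-1:ℝ)•gx + (1:ℝ)•gy := by module
    have bridge : 2*(L-μ)*((f y + ⟪gy, z - y⟫ + L/2*‖z - y‖^2)
        - (f x + ⟪gx, z - x⟫ + μ/2*‖z - x‖^2))
        = 2*(L-μ)*(f y - f x - ⟪gx, y - x⟫ - μ/2*‖y - x‖^2)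
          - ‖gy - gx - μ•(y - x)‖^2 := by
      rw [e1, e2, e3, comb_sq, comb_sq, comb_sq, inner_comb, inner_comb]
      rw [real_inner_comm gx (y-x), real_inner_comm gy (y-x), real_inner_comm gy gx,
        real_inner_self_eq_norm_sq, real_inner_self_eq_norm_sq, hcc]
      field_simp
      ring
    rw [bridge] at comb2
    linarith
  -- the three interpolation inequalities we combine
  have J1 := key x1 xstar
  have J3 := key x0 xstar
  have J5 := key x1 x0
  rw [hgs] at J1 J3
  set e0 := x0 - xstar with he0
  set g0 := gradient f x0 with hg0
  set g1 := gradient f x1 with hg1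
  have horth0 : ⟪g0, g1⟫ = 0 := by rw [real_inner_comm]; exact horth
  -- rewrite all vectors as combinations of e0, g0, g1
  have hb1 : (0:EuclideanSpace ℝ (Fin d)) - g1 - μ•(xstar - x1)
      = μ•e0 + (μ*α)•g0 + (-1:ℝ)•g1 := by rw [he0, hα]; module
  have hb2 : (0:EuclideanSpace ℝ (Fin d)) - g0 - μ•(xstar - x0)
      = μ•e0 + (-1:ℝ)•g0 + (0:ℝ)•g1 := by rw [he0]; module
  have hb3 : g0 - g1 - μ•(x0 - x1)
      = (0:ℝ)•e0 + (1+μ*α)•g0 + (-1:ℝ)•g1 := by rw [hα]; module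
  have ha1 : xstar - x1 = (-1:ℝ)•e0 + (-α)•g0 + (0:ℝ)•g1 := by rw [he0, hα]; module
  have ha2 : xstar - x0 = (-1:ℝ)•e0 + (0:ℝ)•g0 + (0:ℝ)•g1 := by rw [he0]; module
  have ha3 : x0 - x1 = (0:ℝ)•e0 + (-α)•g0 + (0:ℝ)•g1 := by rw [hα]; module
  rw [hb1, ha1, comb_sq, comb_sq, inner_comb_c, horth0] at J1
  rw [hb2, ha2, comb_sq, comb_sq, inner_comb_b, horth0] at J3
  rw [hb3, ha3, comb_sq, comb_sq, inner_comb_c, horth0] at J5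
  -- the two sum-of-squares certificates
  have hSq1 : (0:ℝ) ≤ ‖(2*L*μ)•e0 + (μ*(L+μ)*α - (L-μ))•g0 + (-(L+μ))•g1‖^2 := by
    positivity
  rw [comb_sq, horth0] at hSq1
  have hSq2 : (0:ℝ) ≤ μ*(L-μ)*(((L+μ)*α + 2)^2*‖g0‖^2) := by positivity
  -- scaled versions of the interpolation inequalities
  have hT1 := mul_nonneg (by positivity : (0:ℝ) ≤ 2*μ*(L+μ)) (sub_nonneg.mpr J1)
  have hT3 := mul_nonneg (by positivity : (0:ℝ) ≤ 2*μ*(L-μ)) (sub_nonneg.mpr J3)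
  have hT5 := mul_nonneg (by positivity : (0:ℝ) ≤ (L-μ)*(L+μ)) (sub_nonneg.mpr J5)
  subst hfstar
  have hS2 : (0:ℝ) < (L+μ)^2 := by positivity
  rw [div_pow, div_mul_eq_mul_div, le_div_iff₀ hS2]
  have main2 : 2*(L-μ)*((f x1 - f xstar)*(L+μ)^2 - (L-μ)^2*(f x0 - f xstar)) ≤ 0 := by
    linarith [hT1, hT3, hT5, hSq1, hSq2]
  nlinarith [main2, hM]
end

section
/- Let 0 < μ < L and let f: R^d → R be L-smooth and μ-strongly convex, with unique minimizer x_* and minimum value f_* = f(x_*). If x_0, x_1 ∈ R^d satisfy the single combined condition ⟨∇f(x_1), x_1 - x_0 + (2/(L+μ))∇f(x_0)⟩ = 0, then f(x_1) - f_* ≤ ((L-μ)/(L+μ))² (f(x_0) - f_*). -/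
open RealInnerProductSpace

set_option maxHeartbeats 1000000 in
private lemma interp_aux {d : ℕ} (μ L : ℝ) (hμ : 0 < μ) (hμL : μ < L)
    (f : EuclideanSpace ℝ (Fin d) → ℝ)
    (hsmooth : ∀ x y : EuclideanSpace ℝ (Fin d),
      f x ≤ f y + ⟪gradient f y, x - y⟫ + L / 2 * ‖x - y‖ ^ 2)
    (hstrong : ∀ x y : EuclideanSpace ℝ (Fin d),
      f x ≥ f y + ⟪gradient f y, x - y⟫ + μ / 2 * ‖x - y‖ ^ 2)
    (x y : EuclideanSpace ℝ (Fin d)) :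
    ‖gradient f x - gradient f y - μ • (x - y)‖ ^ 2
      ≤ 2 * (L - μ) * (f x - f y - ⟪gradient f y, x - y⟫ - μ / 2 * ‖x - y‖ ^ 2) := by
  have hLμ : (0:ℝ) < L - μ := by linarith
  have hne : L - μ ≠ 0 := ne_of_gt hLμ
  set gx := gradient f x with hgx
  set gy := gradient f y with hgy
  set z : EuclideanSpace ℝ (Fin d) := x - (L - μ)⁻¹ • (gx - gy - μ • (x - y)) with hz
  have hD : 0 ≤ (f x + ⟪gx, z - x⟫ + L / 2 * ‖z - x‖ ^ 2)
      - (f y + ⟪gy, z - y⟫ + μ / 2 * ‖z - y‖ ^ 2) := by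
    have h1 := hstrong z y
    have h2 := hsmooth z x
    linarith
  have hkey : 2 * (L - μ) * (f x - f y - ⟪gy, x - y⟫ - μ / 2 * ‖x - y‖ ^ 2)
      - ‖gx - gy - μ • (x - y)‖ ^ 2
      = 2 * (L - μ) * ((f x + ⟪gx, z - x⟫ + L / 2 * ‖z - x‖ ^ 2)
        - (f y + ⟪gy, z - y⟫ + μ / 2 * ‖z - y‖ ^ 2)) := by
    simp only [hz]
    simp only [← real_inner_self_eq_norm_sq]
    simp only [inner_sub_left, inner_sub_right, inner_add_left, inner_add_right,
      real_inner_smul_left, real_inner_smul_right,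
      real_inner_comm x gx, real_inner_comm y gx, real_inner_comm x gy, real_inner_comm y gy,
      real_inner_comm gy gx, real_inner_comm y x]
    field_simp
    ring
  nlinarith [mul_nonneg (by linarith : (0:ℝ) ≤ 2 * (L - μ)) hD, hkey]

set_option maxHeartbeats 2000000 in
/-- For an `L`-smooth `μ`-strongly-convex `f` (`0 < μ < L`) with unique
minimizer `x_*` and minimum value `f_* = f(x_*)`, the single combined condition
`⟪∇f(x₁), x₁ - x₀ + (2/(L+μ)) ∇f(x₀)⟫ = 0` already implies the rate
`f(x₁) - f_* ≤ ((L-μ)/(L+μ))² (f(x₀) - f_*)`. -/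
theorem combined_orthogonality_rate
    {d : ℕ} (μ L : ℝ) (hμ : 0 < μ) (hμL : μ < L)
    (f : EuclideanSpace ℝ (Fin d) → ℝ) (hf : ContDiff ℝ 1 f)
    (hsmooth : ∀ x y : EuclideanSpace ℝ (Fin d),
      f x ≤ f y + ⟪gradient f y, x - y⟫ + L / 2 * ‖x - y‖ ^ 2)
    (hstrong : ∀ x y : EuclideanSpace ℝ (Fin d),
      f x ≥ f y + ⟪gradient f y, x - y⟫ + μ / 2 * ‖x - y‖ ^ 2)
    (xstar : EuclideanSpace ℝ (Fin d)) (hmin : ∀ y, f xstar ≤ f y)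
    (huniq : ∀ y, (∀ z, f y ≤ f z) → y = xstar)
    (fstar : ℝ) (hfstar : fstar = f xstar)
    (x0 x1 : EuclideanSpace ℝ (Fin d))
    (hcomb : ⟪gradient f x1, x1 - x0 + (2 / (L + μ)) • gradient f x0⟫ = 0) :
    f x1 - fstar ≤ ((L - μ) / (L + μ)) ^ 2 * (f x0 - fstar) := by
  have hL : (0:ℝ) < L := lt_trans hμ hμL
  have hLμ : (0:ℝ) < L - μ := by linarith
  have hLpμ : (0:ℝ) < L + μ := by linarith
  -- gradient vanishes at the minimizer
  have hgs : gradient f xstar = 0 := by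
    set g := gradient f xstar with hg
    have h := hsmooth (xstar - L⁻¹ • g) xstar
    have h2 := hmin (xstar - L⁻¹ • g)
    have e0 : (xstar - L⁻¹ • g) - xstar = -(L⁻¹ • g) := by abel
    rw [e0, inner_neg_right, real_inner_smul_right, real_inner_self_eq_norm_sq,
      norm_neg, norm_smul, Real.norm_eq_abs, abs_of_pos (inv_pos.mpr hL)] at h
    rw [← hg] at h
    have e1 : L / 2 * (L⁻¹ * ‖g‖) ^ 2 = L⁻¹ * ‖g‖ ^ 2 / 2 := by
      field_simp
    have hsq : ‖g‖ ^ 2 ≤ 0 := by nlinarith [h, h2, e1, inv_pos.mpr hL]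
    have h5 : ‖g‖ ^ 2 = 0 := le_antisymm hsq (sq_nonneg _)
    exact norm_eq_zero.mp ((pow_eq_zero_iff (by norm_num : (2:ℕ) ≠ 0)).mp h5)
  subst hfstar
  have hE1 := interp_aux μ L hμ hμL f hsmooth hstrong x0 x1
  have hE2 := interp_aux μ L hμ hμL f hsmooth hstrong xstar x1
  have hE3 := interp_aux μ L hμ hμL f hsmooth hstrong xstar x0
  rw [hgs] at hE2 hE3
  set a := gradient f x0 with ha
  set b := gradient f x1 with hb
  have hcomb0 : ⟪b, x1 - x0⟫ + 2 / (L + μ) * ⟪b, a⟫ = 0 := by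
    rw [inner_add_right, real_inner_smul_right] at hcomb
    have e2 : ⟪b, x1 - x0⟫ = -⟪b, x0 - x1⟫ := by
      rw [← inner_neg_right]
      congr 1
      abel
    linarith [hcomb]
  have hcomb' : (L + μ) * ⟪b, x1 - x0⟫ + 2 * ⟪b, a⟫ = 0 := by
    obtain ⟨P, hP⟩ : ∃ P, (⟪b, x1 - x0⟫ : ℝ) = P := ⟨_, rfl⟩
    obtain ⟨Q, hQ⟩ : ∃ Q, (⟪b, a⟫ : ℝ) = Q := ⟨_, rfl⟩
    rw [hP, hQ] at hcomb0 ⊢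
    field_simp at hcomb0
    linarith [hcomb0]
  have hN1 : (0:ℝ) ≤ ‖(L - μ) • a + (L + μ) • b - (μ * (L - μ)) • (x0 - x1)
      + (2 * μ * L) • (xstar - x1)‖ ^ 2 := sq_nonneg _
  have hN2 : (0:ℝ) ≤ ‖(2:ℝ) • a - (L + μ) • (x0 - x1)‖ ^ 2 := sq_nonneg _
  have hkey : 2 * (L - μ) * ((L - μ) ^ 2 * (f x0 - f xstar) - (L + μ) ^ 2 * (f x1 - f xstar))
      = (L ^ 2 - μ ^ 2) *
          (2 * (L - μ) * (f x0 - f x1 - ⟪b, x0 - x1⟫ - μ / 2 * ‖x0 - x1‖ ^ 2)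
            - ‖a - b - μ • (x0 - x1)‖ ^ 2)
        + 2 * μ * (L + μ) *
          (2 * (L - μ) * (f xstar - f x1 - ⟪b, xstar - x1⟫ - μ / 2 * ‖xstar - x1‖ ^ 2)
            - ‖0 - b - μ • (xstar - x1)‖ ^ 2)
        + 2 * μ * (L - μ) *
          (2 * (L - μ) * (f xstar - f x0 - ⟪a, xstar - x0⟫ - μ / 2 * ‖xstar - x0‖ ^ 2)
            - ‖0 - a - μ • (xstar - x0)‖ ^ 2)
        - 2 * (L - μ) * (L + μ) * ((L + μ) * ⟪b, x1 - x0⟫ + 2 * ⟪b, a⟫)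
        + ‖(L - μ) • a + (L + μ) • b - (μ * (L - μ)) • (x0 - x1)
            + (2 * μ * L) • (xstar - x1)‖ ^ 2
        + μ * (L - μ) * ‖(2:ℝ) • a - (L + μ) • (x0 - x1)‖ ^ 2 := by
    simp only [← real_inner_self_eq_norm_sq]
    simp only [inner_sub_left, inner_sub_right, inner_add_left, inner_add_right,
      real_inner_smul_left, real_inner_smul_right, inner_zero_left, inner_zero_right,
      real_inner_comm b a, real_inner_comm x0 a, real_inner_comm x1 a, real_inner_comm xstar a,
      real_inner_comm x0 b, real_inner_comm x1 b, real_inner_comm xstar b,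
      real_inner_comm x1 x0, real_inner_comm xstar x0, real_inner_comm xstar x1]
    ring
  have c1 : (0:ℝ) ≤ L ^ 2 - μ ^ 2 := by nlinarith
  have c2 : (0:ℝ) ≤ 2 * μ * (L + μ) := by positivity
  have c3 : (0:ℝ) ≤ 2 * μ * (L - μ) := by nlinarith
  have c4 : (0:ℝ) ≤ μ * (L - μ) := by nlinarith
  have hsum : 0 ≤ 2 * (L - μ) *
      ((L - μ) ^ 2 * (f x0 - f xstar) - (L + μ) ^ 2 * (f x1 - f xstar)) := by
    rw [hkey, hcomb', mul_zero]
    have t1 := mul_nonneg c1 (sub_nonneg.mpr hE1)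
    have t2 := mul_nonneg c2 (sub_nonneg.mpr hE2)
    have t3 := mul_nonneg c3 (sub_nonneg.mpr hE3)
    have t4 := mul_nonneg c4 hN2
    nlinarith [t1, t2, t3, t4, hN1]
  have hD0 : 0 ≤ (L - μ) ^ 2 * (f x0 - f xstar) - (L + μ) ^ 2 * (f x1 - f xstar) := by
    by_contra hcon
    push_neg at hcon
    nlinarith [hsum, mul_pos (by linarith : (0:ℝ) < 2 * (L - μ)) (neg_pos.mpr hcon)]
  rw [← sub_nonneg]
  have expand : ((L - μ) / (L + μ)) ^ 2 * (f x0 - f xstar) - (f x1 - f xstar)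
      = ((L - μ) ^ 2 * (f x0 - f xstar) - (L + μ) ^ 2 * (f x1 - f xstar)) / (L + μ) ^ 2 := by
    field_simp
    try ring
  rw [expand]
  exact div_nonneg hD0 (by positivity)
end

section
/- Let 0 < μ < L and let f: R^d → R be L-smooth and μ-strongly convex, with unique minimizer x_* and minimum value f_* = f(x_*). For any x_0 ∈ R^d, the gradient descent step with fixed step-size 2/(L+μ), namely x_1 = x_0 - (2/(L+μ))∇f(x_0), satisfies f(x_1) - f_* ≤ ((L-μ)/(L+μ))² (f(x_0) - f_*). -/
open RealInnerProductSpace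

/-- Interpolation inequality for an `L`-smooth, `μ`-strongly-convex function:
`f x ≥ f y + ⟪∇f y, x - y⟫ + μ/2 ‖x-y‖² + 1/(2(L-μ)) ‖∇f x - ∇f y - μ(x-y)‖²`. -/
private lemma interp_ineq {d : ℕ} (μ L : ℝ) (hμ : 0 < μ) (hμL : μ < L)
    (f : EuclideanSpace ℝ (Fin d) → ℝ)
    (hsmooth : ∀ x y : EuclideanSpace ℝ (Fin d),
      f x ≤ f y + ⟪gradient f y, x - y⟫ + L / 2 * ‖x - y‖ ^ 2)
    (hstrong : ∀ x y : EuclideanSpace ℝ (Fin d),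
      f x ≥ f y + ⟪gradient f y, x - y⟫ + μ / 2 * ‖x - y‖ ^ 2)
    (x y : EuclideanSpace ℝ (Fin d)) :
    f y + ⟪gradient f y, x - y⟫ + μ / 2 * ‖x - y‖ ^ 2
      + 1 / (2 * (L - μ)) * ‖gradient f x - gradient f y - μ • (x - y)‖ ^ 2 ≤ f x := by
  have hLμ : (0:ℝ) < L - μ := by linarith
  set gx := gradient f x with hgx
  set gy := gradient f y with hgy
  set v := gx - gy - μ • (x - y) with hv
  set e := (L - μ)⁻¹ with he
  set w := x - e • v with hw
  have h1 := hstrong w y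
  have h2 := hsmooth w x
  have hwx : w - x = -(e • v) := by rw [hw]; abel
  have hwy : w - y = (x - y) - e • v := by rw [hw]; abel
  have hinner2 : ⟪gx, w - x⟫ = -(e * ⟪gx, v⟫) := by
    rw [hwx, inner_neg_right, real_inner_smul_right]
  have hnorm2 : ‖w - x‖ ^ 2 = e ^ 2 * ‖v‖ ^ 2 := by
    rw [hwx, norm_neg, norm_smul, Real.norm_eq_abs, mul_pow, sq_abs]
  have hinner1 : ⟪gy, w - y⟫ = ⟪gy, x - y⟫ - e * ⟪gy, v⟫ := by
    rw [hwy, inner_sub_right, real_inner_smul_right]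
  have hnorm1 : ‖w - y‖ ^ 2 = ‖x - y‖ ^ 2 - 2 * (e * ⟪x - y, v⟫) + e ^ 2 * ‖v‖ ^ 2 := by
    rw [hwy, norm_sub_sq_real, real_inner_smul_right, norm_smul, Real.norm_eq_abs,
      mul_pow, sq_abs]
  have hvv : ⟪gx, v⟫ - ⟪gy, v⟫ - μ * ⟪x - y, v⟫ = ‖v‖ ^ 2 := by
    have hexp : ⟪gx - gy - μ • (x - y), v⟫ = ⟪gx, v⟫ - ⟪gy, v⟫ - μ * ⟪x - y, v⟫ := by
      rw [inner_sub_left, inner_sub_left, real_inner_smul_left]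
    rw [← hexp, ← hv, real_inner_self_eq_norm_sq]
  rw [hinner1, hnorm1] at h1
  rw [hinner2, hnorm2] at h2
  have hkey : e * ⟪gx, v⟫ - e * ⟪gy, v⟫ - μ * (e * ⟪x - y, v⟫) = e * ‖v‖ ^ 2 := by
    linear_combination e * hvv
  have hconst : μ / 2 * (e ^ 2 * ‖v‖ ^ 2) - L / 2 * (e ^ 2 * ‖v‖ ^ 2) + e * ‖v‖ ^ 2
      = 1 / (2 * (L - μ)) * ‖v‖ ^ 2 := by
    rw [he]
    field_simp
    ring
  linarith [h1, h2, hkey, hconst]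

set_option maxHeartbeats 2000000 in
/-- For an `L`-smooth `μ`-strongly-convex `f` (`0 < μ < L`) with unique
minimizer `x_*` and minimum value `f_* = f(x_*)`, the gradient step with fixed step-size
`2/(L+μ)`, i.e. `x₁ = x₀ - (2/(L+μ)) ∇f(x₀)`, satisfies
`f(x₁) - f_* ≤ ((L-μ)/(L+μ))² (f(x₀) - f_*)`. -/
theorem gradient_descent_fixed_step_rate
    {d : ℕ} (μ L : ℝ) (hμ : 0 < μ) (hμL : μ < L)
    (f : EuclideanSpace ℝ (Fin d) → ℝ) (hf : ContDiff ℝ 1 f)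
    (hsmooth : ∀ x y : EuclideanSpace ℝ (Fin d),
      f x ≤ f y + ⟪gradient f y, x - y⟫ + L / 2 * ‖x - y‖ ^ 2)
    (hstrong : ∀ x y : EuclideanSpace ℝ (Fin d),
      f x ≥ f y + ⟪gradient f y, x - y⟫ + μ / 2 * ‖x - y‖ ^ 2)
    (xstar : EuclideanSpace ℝ (Fin d)) (hmin : ∀ y, f xstar ≤ f y)
    (huniq : ∀ y, (∀ z, f y ≤ f z) → y = xstar)
    (fstar : ℝ) (hfstar : fstar = f xstar)
    (x0 x1 : EuclideanSpace ℝ (Fin d))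
    (hx1 : x1 = x0 - (2 / (L + μ)) • gradient f x0) :
    f x1 - fstar ≤ ((L - μ) / (L + μ)) ^ 2 * (f x0 - fstar) := by
  have hL : (0:ℝ) < L := lt_trans hμ hμL
  have hE : (0:ℝ) < L - μ := by linarith
  have hD : (0:ℝ) < L + μ := by linarith
  have hD0 : L + μ ≠ 0 := ne_of_gt hD
  have hE0 : L - μ ≠ 0 := ne_of_gt hE
  -- the gradient vanishes at the minimizer
  have hgs : gradient f xstar = 0 := by
    set g := gradient f xstar with hg
    have h2 := hsmooth (xstar - L⁻¹ • g) xstar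
    have hm := hmin (xstar - L⁻¹ • g)
    have hz : xstar - L⁻¹ • g - xstar = -(L⁻¹ • g) := by abel
    rw [hz, inner_neg_right, real_inner_smul_right, real_inner_self_eq_norm_sq,
        norm_neg, norm_smul, Real.norm_eq_abs, mul_pow, sq_abs] at h2
    have h3 : L / 2 * ((L⁻¹) ^ 2 * ‖g‖ ^ 2) = 1 / 2 * (L⁻¹ * ‖g‖ ^ 2) := by
      field_simp
    have h4 : L⁻¹ * ‖g‖ ^ 2 ≤ 0 := by linarith
    have h5 : ‖g‖ ^ 2 = L * (L⁻¹ * ‖g‖ ^ 2) := by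
      field_simp
    have h6 : ‖g‖ ^ 2 ≤ 0 :=
      h5 ▸ mul_nonpos_of_nonneg_of_nonpos (le_of_lt hL) h4
    have h7 : ‖g‖ = 0 := by nlinarith [norm_nonneg g]
    exact norm_eq_zero.mp h7
  -- three interpolation inequalities
  have hQ1 := interp_ineq μ L hμ hμL f hsmooth hstrong x0 x1
  have hQ2 := interp_ineq μ L hμ hμL f hsmooth hstrong xstar x0
  have hQ3 := interp_ineq μ L hμ hμL f hsmooth hstrong xstar x1
  rw [hgs] at hQ2 hQ3
  set g0 := gradient f x0 with hg0
  set g1 := gradient f x1 with hg1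
  set st := 2 / (L + μ) with hst
  set a := x0 - xstar with ha
  set A := ‖a‖ ^ 2 with hA
  set B := ‖g0‖ ^ 2 with hB
  set C := ‖g1‖ ^ 2 with hC
  set P := ⟪a, g0⟫ with hP
  set R := ⟪a, g1⟫ with hR
  set S := ⟪g0, g1⟫ with hS
  -- vector identities
  have hv1 : x0 - x1 = st • g0 := by rw [hx1]; module
  have hv2 : xstar - x0 = -a := by rw [ha]; module
  have hv3 : xstar - x1 = st • g0 - a := by rw [hx1, ha]; module
  have hv4 : g0 - g1 - μ • (x0 - x1) = (1 - μ * st) • g0 - g1 := by rw [hv1]; module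
  have hv5 : (0 : EuclideanSpace ℝ (Fin d)) - g0 - μ • (xstar - x0) = μ • a - g0 := by
    rw [hv2]; module
  have hv6 : (0 : EuclideanSpace ℝ (Fin d)) - g1 - μ • (xstar - x1)
      = μ • (a - st • g0) - g1 := by rw [hv3]; module
  -- commutations
  have cm1 : ⟪g1, g0⟫ = ⟪g0, g1⟫ := real_inner_comm _ _
  have cm2 : ⟪g0, a⟫ = ⟪a, g0⟫ := real_inner_comm _ _
  have cm3 : ⟪g1, a⟫ = ⟪a, g1⟫ := real_inner_comm _ _
  -- scalar expansions
  have s1 : ⟪g1, x0 - x1⟫ = st * S := by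
    rw [hv1, real_inner_smul_right, cm1, ← hS]
  have s2 : ‖x0 - x1‖ ^ 2 = st ^ 2 * B := by
    rw [hv1, norm_smul, Real.norm_eq_abs, mul_pow, sq_abs, ← hB]
  have s3 : ‖(1 - μ * st) • g0 - g1‖ ^ 2
      = (1 - μ * st) ^ 2 * B - 2 * ((1 - μ * st) * S) + C := by
    rw [norm_sub_sq_real, norm_smul, Real.norm_eq_abs, mul_pow, sq_abs,
      real_inner_smul_left, ← hB, ← hC, ← hS]
  have s4 : ⟪g0, xstar - x0⟫ = -P := by
    rw [hv2, inner_neg_right, cm2, ← hP]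
  have s5 : ‖xstar - x0‖ ^ 2 = A := by rw [hv2, norm_neg, ← hA]
  have s6 : ‖μ • a - g0‖ ^ 2 = μ ^ 2 * A - 2 * (μ * P) + B := by
    rw [norm_sub_sq_real, norm_smul, Real.norm_eq_abs, mul_pow, sq_abs,
      real_inner_smul_left, ← hA, ← hB, ← hP]
  have s7 : ⟪g1, xstar - x1⟫ = st * S - R := by
    rw [hv3, inner_sub_right, real_inner_smul_right, cm1, cm3, ← hS, ← hR]
  have s8 : ‖xstar - x1‖ ^ 2 = st ^ 2 * B - 2 * (st * P) + A := by
    rw [hv3, norm_sub_sq_real, norm_smul, Real.norm_eq_abs, mul_pow, sq_abs,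
      real_inner_smul_left, cm2, ← hA, ← hB, ← hP]
  have e1 : ‖a - st • g0‖ ^ 2 = A - 2 * (st * P) + st ^ 2 * B := by
    rw [norm_sub_sq_real, norm_smul, Real.norm_eq_abs, mul_pow, sq_abs,
      real_inner_smul_right, ← hA, ← hB, ← hP]
  have e2 : ⟪a - st • g0, g1⟫ = R - st * S := by
    rw [inner_sub_left, real_inner_smul_left, ← hR, ← hS]
  have s9 : ‖μ • (a - st • g0) - g1‖ ^ 2
      = μ ^ 2 * (A - 2 * (st * P) + st ^ 2 * B) - 2 * (μ * (R - st * S)) + C := by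
    rw [norm_sub_sq_real, norm_smul, Real.norm_eq_abs, mul_pow, sq_abs,
      real_inner_smul_left, e1, e2, ← hC]
  -- sum-of-squares residual term
  have e3 : ‖(2 * μ * L / (L + μ)) • a - g0‖ ^ 2
      = (2 * μ * L / (L + μ)) ^ 2 * A - 2 * (2 * μ * L / (L + μ) * P) + B := by
    rw [norm_sub_sq_real, norm_smul, Real.norm_eq_abs, mul_pow, sq_abs,
      real_inner_smul_left, ← hA, ← hB, ← hP]
  have e4 : ⟪(2 * μ * L / (L + μ)) • a - g0, g1⟫ = 2 * μ * L / (L + μ) * R - S := by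
    rw [inner_sub_left, real_inner_smul_left, ← hR, ← hS]
  have sU : ‖(2 * μ * L / (L + μ)) • a - g0 - g1‖ ^ 2
      = (2 * μ * L / (L + μ)) ^ 2 * A + B + C - 2 * (2 * μ * L / (L + μ) * P)
        - 2 * (2 * μ * L / (L + μ) * R) + 2 * S := by
    rw [norm_sub_sq_real, e3, e4, ← hC]
    ring
  have hNU : 0 ≤ (2 * μ * L / (L + μ)) ^ 2 * A + B + C - 2 * (2 * μ * L / (L + μ) * P)
      - 2 * (2 * μ * L / (L + μ) * R) + 2 * S := by
    rw [← sU]; positivity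
  -- rewrite the interpolation inequalities in scalar form
  rw [s1, s2, hv4, s3] at hQ1
  rw [s4, s5, hv5, s6] at hQ2
  rw [s7, s8, hv6, s9] at hQ3
  -- assemble the certificate
  have c1 : 0 ≤ (L - μ) / (L + μ) * (f x0 - (f x1 + st * S + μ / 2 * (st ^ 2 * B)
      + 1 / (2 * (L - μ)) * ((1 - μ * st) ^ 2 * B - 2 * ((1 - μ * st) * S) + C))) :=
    mul_nonneg (div_nonneg hE.le hD.le) (by linarith only [hQ1])
  have c2 : 0 ≤ 2 * μ * (L - μ) / (L + μ) ^ 2 * (f xstar - (f x0 + -P + μ / 2 * A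
      + 1 / (2 * (L - μ)) * (μ ^ 2 * A - 2 * (μ * P) + B))) :=
    mul_nonneg (div_nonneg (mul_nonneg (mul_nonneg (by norm_num) hμ.le) hE.le) (by positivity))
      (by linarith only [hQ2])
  have c3 : 0 ≤ 2 * μ / (L + μ) * (f xstar - (f x1 + (st * S - R)
      + μ / 2 * (st ^ 2 * B - 2 * (st * P) + A)
      + 1 / (2 * (L - μ)) * (μ ^ 2 * (A - 2 * (st * P) + st ^ 2 * B)
          - 2 * (μ * (R - st * S)) + C))) :=
    mul_nonneg (div_nonneg (mul_nonneg (by norm_num) hμ.le) hD.le) (by linarith only [hQ3])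
  have c4 : 0 ≤ 1 / (2 * (L - μ)) * ((2 * μ * L / (L + μ)) ^ 2 * A + B + C
      - 2 * (2 * μ * L / (L + μ) * P) - 2 * (2 * μ * L / (L + μ) * R) + 2 * S) :=
    mul_nonneg (div_nonneg zero_le_one (by linarith only [hE])) hNU
  have hid : (L - μ) / (L + μ) * (f x0 - (f x1 + st * S + μ / 2 * (st ^ 2 * B)
      + 1 / (2 * (L - μ)) * ((1 - μ * st) ^ 2 * B - 2 * ((1 - μ * st) * S) + C)))
      + 2 * μ * (L - μ) / (L + μ) ^ 2 * (f xstar - (f x0 + -P + μ / 2 * A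
      + 1 / (2 * (L - μ)) * (μ ^ 2 * A - 2 * (μ * P) + B)))
      + 2 * μ / (L + μ) * (f xstar - (f x1 + (st * S - R)
      + μ / 2 * (st ^ 2 * B - 2 * (st * P) + A)
      + 1 / (2 * (L - μ)) * (μ ^ 2 * (A - 2 * (st * P) + st ^ 2 * B)
          - 2 * (μ * (R - st * S)) + C)))
      + 1 / (2 * (L - μ)) * ((2 * μ * L / (L + μ)) ^ 2 * A + B + C
      - 2 * (2 * μ * L / (L + μ) * P) - 2 * (2 * μ * L / (L + μ) * R) + 2 * S)
      = ((L - μ) / (L + μ)) ^ 2 * (f x0 - f xstar) - (f x1 - f xstar) := by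
    rw [hst]
    field_simp
    ring
  have hfin : 0 ≤ ((L - μ) / (L + μ)) ^ 2 * (f x0 - f xstar) - (f x1 - f xstar) :=
    hid ▸ add_nonneg (add_nonneg (add_nonneg c1 c2) c3) c4
  subst hfstar
  linarith only [hfin]
end

section
/- Let L > 0 and let f: R^d → R be convex and L-smooth, with a minimizer x_* and minimum value f_* = f(x_*). Define λ_0 = 0, λ_{t+1} = 1/2 + sqrt(1/4 + λ_t²), and the NAG iterates: x_{-1} = x_0, and for t ≥ 0, y_t = x_t + ((λ_t - 1)/λ_{t+1})(x_t - x_{t-1}), x_{t+1} = y_t - (1/L)∇f(y_t). Then the Lyapunov sequence V_t = λ_t²(f(x_t) - f_*) + (L/2)‖λ_t(x_t - x_*) + (1 - λ_t)(x_{t-1} - x_*)‖² is nonincreasing: V_{t+1} ≤ V_t for all t ≥ 0. -/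
open RealInnerProductSpace

lemma convex_grad_le {d : ℕ} (f : EuclideanSpace ℝ (Fin d) → ℝ) (hf : ContDiff ℝ 1 f)
    (hconv : ConvexOn ℝ Set.univ f) (y z : EuclideanSpace ℝ (Fin d)) :
    f y + ⟪gradient f y, z - y⟫ ≤ f z := by
  have hdiff : DifferentiableAt ℝ f y := (hf.differentiable one_ne_zero) y
  have hgrad : HasGradientAt f (gradient f y) y := hdiff.hasGradientAt
  have hF : HasFDerivAt f ((InnerProductSpace.toDual ℝ _) (gradient f y)) y :=
    hasGradientAt_iff_hasFDerivAt.mp hgrad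
  set G : ℝ → ℝ := fun t => f (y + t • (z - y)) with hG
  have hphi : HasDerivAt (fun t : ℝ => y + t • (z - y)) (z - y) 0 := by
    simpa using ((hasDerivAt_id (0:ℝ)).smul_const (z - y)).const_add y
  have hphi0 : y + (0:ℝ) • (z - y) = y := by simp
  have hGd : HasDerivAt G ⟪gradient f y, z - y⟫ 0 := by
    have hF' : HasFDerivAt f ((InnerProductSpace.toDual ℝ _) (gradient f y))
        (y + (0:ℝ) • (z - y)) := by rw [hphi0]; exact hF
    have := (hF'.comp_hasDerivAt (0:ℝ) hphi)
    simpa only [hG, Function.comp_def, InnerProductSpace.toDual_apply_apply] using this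
  have htend : Filter.Tendsto (slope G 0) (nhdsWithin 0 (Set.Ioi 0))
      (nhds ⟪gradient f y, z - y⟫) := by
    exact (hasDerivAt_iff_tendsto_slope.mp hGd).mono_left
      (nhdsWithin_mono 0 (fun t ht => ne_of_gt ht))
  have hbound : ∀ᶠ t in nhdsWithin (0:ℝ) (Set.Ioi 0), slope G 0 t ≤ f z - f y := by
    filter_upwards [Ioc_mem_nhdsGT_of_mem (Set.mem_Ico.mpr ⟨le_refl 0, zero_lt_one⟩)]
      with t ht
    obtain ⟨ht0, ht1⟩ := ht
    have hcvx := hconv.2 (Set.mem_univ y) (Set.mem_univ z)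
      (by linarith : (0:ℝ) ≤ 1 - t) (le_of_lt ht0) (by ring)
    have heq : (1 - t) • y + t • z = y + t • (z - y) := by module
    rw [heq] at hcvx
    rw [slope_def_field]
    have : G t ≤ (1 - t) * f y + t * f z := hcvx
    have hG0 : G 0 = f y := by simp [hG]
    rw [sub_zero, div_le_iff₀ ht0, hG0]
    nlinarith [this]
  have : ⟪gradient f y, z - y⟫ ≤ f z - f y :=
    le_of_tendsto htend hbound
  linarith

/-- For a convex `L`-smooth `f` with minimizer `x_*` and minimum value
`f_* = f(x_*)`, Nesterov's accelerated gradient method (with `λ₀ = 0`,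
`λ_{t+1} = 1/2 + √(1/4 + λ_t²)`, `x_{-1} = x₀`, `y_t = x_t + ((λ_t - 1)/λ_{t+1})(x_t - x_{t-1})`,
`x_{t+1} = y_t - (1/L)∇f(y_t)`) admits the nonincreasing Lyapunov sequence
`V_t = λ_t²(f(x_t) - f_*) + (L/2)‖λ_t(x_t - x_*) + (1 - λ_t)(x_{t-1} - x_*)‖²`.
Here `xp t` denotes `x_{t-1}` (with `xp 0 = x₀`). -/
theorem nag_lyapunov_nonincreasing
    {d : ℕ} (L : ℝ) (hL : 0 < L)
    (f : EuclideanSpace ℝ (Fin d) → ℝ) (hf : ContDiff ℝ 1 f)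
    (hconv : ConvexOn ℝ Set.univ f)
    (hsmooth : ∀ x y : EuclideanSpace ℝ (Fin d),
      f x ≤ f y + ⟪gradient f y, x - y⟫ + L / 2 * ‖x - y‖ ^ 2)
    (xstar : EuclideanSpace ℝ (Fin d)) (hmin : ∀ y, f xstar ≤ f y)
    (fstar : ℝ) (hfstar : fstar = f xstar)
    (lam : ℕ → ℝ) (hlam0 : lam 0 = 0)
    (hlam : ∀ t : ℕ, lam (t + 1) = 1 / 2 + Real.sqrt (1 / 4 + lam t ^ 2))
    (x xp y : ℕ → EuclideanSpace ℝ (Fin d))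
    (hxp0 : xp 0 = x 0) (hxp : ∀ t : ℕ, xp (t + 1) = x t)
    (hy : ∀ t : ℕ, y t = x t + ((lam t - 1) / lam (t + 1)) • (x t - xp t))
    (hx : ∀ t : ℕ, x (t + 1) = y t - (1 / L) • gradient f (y t))
    (V : ℕ → ℝ)
    (hV : ∀ t : ℕ, V t = lam t ^ 2 * (f (x t) - fstar)
      + L / 2 * ‖lam t • (x t - xstar) + (1 - lam t) • (xp t - xstar)‖ ^ 2) :
    ∀ t : ℕ, V (t + 1) ≤ V t := by
  intro t
  have hLne : L ≠ 0 := ne_of_gt hL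
  set a := lam t with ha
  set b := lam (t + 1) with hbdef
  set g := gradient f (y t) with hg
  set G := ‖g‖ ^ 2 with hGdef
  -- facts about b
  have hs2 : Real.sqrt (1 / 4 + a ^ 2) ^ 2 = 1 / 4 + a ^ 2 :=
    Real.sq_sqrt (by positivity)
  have hs1 : (1:ℝ) / 2 ≤ Real.sqrt (1 / 4 + a ^ 2) := by
    rw [show (1:ℝ)/2 = Real.sqrt ((1/2)^2) by rw [Real.sqrt_sq]; norm_num]
    exact Real.sqrt_le_sqrt (by nlinarith)
  have hb1 : (1:ℝ) ≤ b := by rw [hbdef, hlam t]; linarith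
  have hbne : b ≠ 0 := by linarith
  have hb2 : b ^ 2 - b = a ^ 2 := by
    rw [hbdef, hlam t]; linear_combination hs2
  -- vectors
  set w := a • (x t - xstar) + (1 - a) • (xp t - xstar) with hw
  set u := b • (x (t + 1) - xstar) + (1 - b) • (x t - xstar) with hu
  set P := ⟪g, w⟫ with hP
  -- vector identity 1 : u = w - (b/L) • g
  have hid2 : u = w - (b / L) • g := by
    rw [hu, hw, hx t, ← hg, hy t, ← hbdef, ← ha]
    match_scalars <;> field_simp [hbne, hLne] <;> ring
  -- vector identity 2
  have hid1 : (b ^ 2 - b) • (y t - x t) + b • (y t - xstar) = b • w := by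
    rw [hw, hy t, ← hbdef, ← ha]
    match_scalars <;> field_simp [hbne] <;> ring
  -- inner product identity
  have hinner : (b ^ 2 - b) * ⟪g, y t - x t⟫ + b * ⟪g, y t - xstar⟫ = b * P := by
    calc (b ^ 2 - b) * ⟪g, y t - x t⟫ + b * ⟪g, y t - xstar⟫
        = ⟪g, (b ^ 2 - b) • (y t - x t) + b • (y t - xstar)⟫ := by
          rw [inner_add_right, real_inner_smul_right, real_inner_smul_right]
      _ = ⟪g, b • w⟫ := by rw [hid1]
      _ = b * P := by rw [real_inner_smul_right, hP]
  -- norm identity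
  have hnorm : ‖u‖ ^ 2 = ‖w‖ ^ 2 - 2 * (b / L) * P + (b / L) ^ 2 * G := by
    rw [hid2, norm_sub_sq_real, real_inner_smul_right, real_inner_comm g w, hP, hGdef,
      norm_smul, Real.norm_eq_abs, mul_pow, sq_abs]
    ring
  -- descent inequality
  have hstep : x (t + 1) - y t = -((1 / L) • g) := by rw [hx t, ← hg]; abel
  have hdesc : f (x (t + 1)) ≤ f (y t) - 1 / (2 * L) * G := by
    have h := hsmooth (x (t + 1)) (y t)
    rw [hstep, inner_neg_right, real_inner_smul_right, real_inner_self_eq_norm_sq,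
      norm_neg, norm_smul, Real.norm_eq_abs, mul_pow, sq_abs] at h
    rw [← hg, ← hGdef] at h
    have harith : L / 2 * ((1 / L) ^ 2 * G) = 1 / (2 * L) * G := by
      field_simp
    have harith2 : 1 / L * G = 2 * (1 / (2 * L) * G) := by field_simp
    linarith [h, harith, harith2]
  -- convexity inequalities
  have hcv1 : f (y t) + ⟪g, x t - y t⟫ ≤ f (x t) := convex_grad_le f hf hconv (y t) (x t)
  have hcv2 : f (y t) + ⟪g, xstar - y t⟫ ≤ fstar := by
    rw [hfstar]; exact convex_grad_le f hf hconv (y t) xstar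
  have hflip1 : ⟪g, x t - y t⟫ = -⟪g, y t - x t⟫ := by
    rw [← inner_neg_right]; congr 1; abel
  have hflip2 : ⟪g, xstar - y t⟫ = -⟪g, y t - xstar⟫ := by
    rw [← inner_neg_right]; congr 1; abel
  have ineqA : f (x (t + 1)) - f (x t) ≤ ⟪g, y t - x t⟫ - 1 / (2 * L) * G := by
    rw [hflip1] at hcv1; linarith
  have ineqB : f (x (t + 1)) - fstar ≤ ⟪g, y t - xstar⟫ - 1 / (2 * L) * G := by
    rw [hflip2] at hcv2; linarith
  -- assemble
  rw [hV (t + 1), hV t, hxp t, ← ha, ← hbdef, ← hw, ← hu, hnorm]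
  have h1 : (b ^ 2 - b) * (f (x (t + 1)) - f (x t))
      ≤ (b ^ 2 - b) * (⟪g, y t - x t⟫ - 1 / (2 * L) * G) := by
    apply mul_le_mul_of_nonneg_left ineqA; rw [hb2]; positivity
  have h2 : b * (f (x (t + 1)) - fstar)
      ≤ b * (⟪g, y t - xstar⟫ - 1 / (2 * L) * G) := by
    apply mul_le_mul_of_nonneg_left ineqB; linarith
  have hkey : b ^ 2 * (f (x (t + 1)) - fstar)
      ≤ a ^ 2 * (f (x t) - fstar) + b * P - b ^ 2 * (1 / (2 * L) * G) := by
    calc b ^ 2 * (f (x (t + 1)) - fstar)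
        = (b ^ 2 - b) * (f (x (t + 1)) - f (x t)) + b * (f (x (t + 1)) - fstar)
            + (b ^ 2 - b) * (f (x t) - fstar) := by ring
      _ ≤ (b ^ 2 - b) * (⟪g, y t - x t⟫ - 1 / (2 * L) * G)
            + b * (⟪g, y t - xstar⟫ - 1 / (2 * L) * G)
            + a ^ 2 * (f (x t) - fstar) :=
          add_le_add (add_le_add h1 h2) (le_of_eq (by rw [hb2]))
      _ = a ^ 2 * (f (x t) - fstar) + b * P - b ^ 2 * (1 / (2 * L) * G) := by
          linear_combination hinner
  have hexp : L / 2 * (‖w‖ ^ 2 - 2 * (b / L) * P + (b / L) ^ 2 * G)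
      = L / 2 * ‖w‖ ^ 2 - b * P + b ^ 2 * (1 / (2 * L) * G) := by
    field_simp
  linarith [hkey, hexp]
end
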